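/- Let π be a deterministic policy in a tabular MDP with minimal gap Δ_min that is not optimal (π ∉ Π*). Then V₁*(s₁) − V₁^π(s₁) ≥ d_min·Δ_min, where d_min := min over optimal policies π* ∈ Π*, steps h, and (s_h,a_h) with d^{π*}(s_h,a_h) > 0, of d^{π*}(s_h,a_h). -/
import Mathlib


open Finset MeasureTheory Classical
open scoped Classical

/-- A finite-horizon tabular MDP with horizon `H`, fixed initial state `s0`,
time-dependent transition kernel `P` and deterministic rewards `r` in `[0,1]`.
Steps are indexed `1, …, H` (so value functions live on `1, …, H+1`). -/
structure TabMDP (S A : Type) [Fintype S] [Fintype A] where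
  H : ℕ
  s0 : S
  P : ℕ → S → A → S → ℝ
  r : ℕ → S → A → ℝ
  P_nonneg : ∀ h s a s', 0 ≤ P h s a s'
  P_sum_one : ∀ h s a, ∑ s', P h s a s' = 1
  r_nonneg : ∀ h s a, 0 ≤ r h s a
  r_le_one : ∀ h s a, r h s a ≤ 1

namespace TabMDP

variable {S A : Type} [Fintype S] [Nonempty S] [Fintype A] [Nonempty A]

/-- Value function of a deterministic policy, computed with `n` remaining steps starting
at step `h`: `Vfuel M π n h s = E_π[∑_{h'=h}^{h+n-1} r(s_{h'},a_{h'}) | s_h = s]`. -/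
noncomputable def Vfuel (M : TabMDP S A) (π : ℕ → S → A) : ℕ → ℕ → S → ℝ
  | 0, _, _ => 0
  | n + 1, h, s =>
      M.r h s (π h s) + ∑ s', M.P h s (π h s) s' * Vfuel M π n (h + 1) s'

/-- `V M π h s = V^π_h(s)`, for `1 ≤ h ≤ H+1`. -/
noncomputable def V (M : TabMDP S A) (π : ℕ → S → A) (h : ℕ) (s : S) : ℝ :=
  Vfuel M π (M.H + 1 - h) h s

/-- Q-function of a deterministic policy. -/
noncomputable def Q (M : TabMDP S A) (π : ℕ → S → A) (h : ℕ) (s : S) (a : A) : ℝ :=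
  M.r h s a + ∑ s', M.P h s a s' * V M π (h + 1) s'

/-- Optimal value function with `n` remaining steps. -/
noncomputable def VstarFuel (M : TabMDP S A) : ℕ → ℕ → S → ℝ
  | 0, _, _ => 0
  | n + 1, h, s =>
      ⨆ a : A, (M.r h s a + ∑ s', M.P h s a s' * VstarFuel M n (h + 1) s')

/-- `Vstar M h s = V^*_h(s)`. -/
noncomputable def Vstar (M : TabMDP S A) (h : ℕ) (s : S) : ℝ :=
  VstarFuel M (M.H + 1 - h) h s

/-- Optimal Q-function `Q^*_h(s,a)`. -/
noncomputable def Qstar (M : TabMDP S A) (h : ℕ) (s : S) (a : A) : ℝ :=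
  M.r h s a + ∑ s', M.P h s a s' * Vstar M (h + 1) s'

/-- Suboptimality gap `Δ_h(s,a) = V^*_h(s) - Q^*_h(s,a)`. -/
noncomputable def gap (M : TabMDP S A) (h : ℕ) (s : S) (a : A) : ℝ :=
  Vstar M h s - Qstar M h s a

/-- A deterministic policy is optimal if it achieves the optimal value at the initial state. -/
def IsOptimal (M : TabMDP S A) (π : ℕ → S → A) : Prop :=
  V M π 1 M.s0 = Vstar M 1 M.s0

/-- State occupancy `d^π(s_h) = Pr(S_h = s_h | S_1 = s0, π)`, for `1 ≤ h ≤ H`. -/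
noncomputable def stateOcc (M : TabMDP S A) (π : ℕ → S → A) : ℕ → S → ℝ
  | 0 => fun _ => 0
  | 1 => fun s => if s = M.s0 then 1 else 0
  | h + 2 => fun s' => ∑ s, stateOcc M π (h + 1) s * M.P (h + 1) s (π (h + 1) s) s'

/-- State-action occupancy `d^π(s_h, a_h)` of a deterministic policy. -/
noncomputable def occ (M : TabMDP S A) (π : ℕ → S → A) (h : ℕ) (s : S) (a : A) : ℝ :=
  if π h s = a then stateOcc M π h s else 0

/-- Expected sum of a per-step function along trajectories of `π` started at `(h,s)` with
`n` remaining steps: `pathSum M π g n h s = E_π[∑_{h'=h}^{h+n-1} g(h', s_{h'}, a_{h'}) | s_h = s]`. -/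
noncomputable def pathSum (M : TabMDP S A) (π : ℕ → S → A) (g : ℕ → S → A → ℝ) :
    ℕ → ℕ → S → ℝ
  | 0, _, _ => 0
  | n + 1, h, s =>
      g h s (π h s) + ∑ s', M.P h s (π h s) s' * pathSum M π g n (h + 1) s'

/-- `E_{π_k}[∑_{h'} 𝟙[Ẽ_{h'}] g(h', s_{h'})]` where `Ẽ_{h'}` is the event that step `h'` is the
first step along the trajectory (generated by `πk`) at which `πk(s_{h'}) ≠ π(s_{h'})`;
computed by the recursion that stops and pays `g h s` at the first disagreeing state. -/
noncomputable def firstDisagreeExp (M : TabMDP S A) (πk π : ℕ → S → A) (g : ℕ → S → ℝ) :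
    ℕ → ℕ → S → ℝ
  | 0, _, _ => 0
  | n + 1, h, s =>
      if πk h s ≠ π h s then g h s
      else ∑ s', M.P h s (πk h s) s' * firstDisagreeExp M πk π g n (h + 1) s'

/-- Probability, under trajectories of `πk` started at `s0` at step 1, that `πk` disagrees
with `π` at some visited state within steps `1, …, H`. -/
noncomputable def disagreeProb (M : TabMDP S A) (πk π : ℕ → S → A) : ℝ :=
  firstDisagreeExp M πk π (fun _ _ => 1) M.H 1 M.s0

/-! ### Stochastic policies -/

/-- A stochastic policy `πs h s a` = probability of taking `a` at state `s`, step `h`. -/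
def IsStochasticPolicy (πs : ℕ → S → A → ℝ) : Prop :=
  ∀ h s, (∀ a, 0 ≤ πs h s a) ∧ ∑ a, πs h s a = 1

/-- State occupancy of a stochastic policy. -/
noncomputable def stateOccS (M : TabMDP S A) (πs : ℕ → S → A → ℝ) : ℕ → S → ℝ
  | 0 => fun _ => 0
  | 1 => fun s => if s = M.s0 then 1 else 0
  | h + 2 => fun s' =>
      ∑ s, ∑ a, stateOccS M πs (h + 1) s * πs (h + 1) s a * M.P (h + 1) s a s'

/-- State-action occupancy of a stochastic policy. -/
noncomputable def occS (M : TabMDP S A) (πs : ℕ → S → A → ℝ) (h : ℕ) (s : S) (a : A) : ℝ :=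
  stateOccS M πs h s * πs h s a

/-- Value function of a stochastic policy (with fuel). -/
noncomputable def VSfuel (M : TabMDP S A) (πs : ℕ → S → A → ℝ) : ℕ → ℕ → S → ℝ
  | 0, _, _ => 0
  | n + 1, h, s =>
      ∑ a, πs h s a * (M.r h s a + ∑ s', M.P h s a s' * VSfuel M πs n (h + 1) s')

/-- Value of a stochastic policy. -/
noncomputable def VS (M : TabMDP S A) (πs : ℕ → S → A → ℝ) (h : ℕ) (s : S) : ℝ :=
  VSfuel M πs (M.H + 1 - h) h s

/-- A stochastic policy is optimal if it achieves the optimal value at the initial state. -/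
def IsOptimalS (M : TabMDP S A) (πs : ℕ → S → A → ℝ) : Prop :=
  VS M πs 1 M.s0 = Vstar M 1 M.s0

/-- `d^*_{h,min}(s_h,a_h)`: the minimal positive occupancy of `(s_h,a_h)` over deterministic
optimal policies that reach `(s_h, a_h)`. -/
noncomputable def dhmin (M : TabMDP S A) (h : ℕ) (s : S) (a : A) : ℝ :=
  sInf {x : ℝ | ∃ π : ℕ → S → A, IsOptimal M π ∧ occ M π h s a = x ∧ 0 < x}

/-- `Z_{h,div}`: state-action pairs whose state is reachable by some deterministic optimal
policy but unreachable by some other deterministic optimal policy. -/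
def Zdiv (M : TabMDP S A) (h : ℕ) : Set (S × A) :=
  {p | ∃ π π' : ℕ → S → A, IsOptimal M π ∧ IsOptimal M π' ∧
        0 < stateOcc M π h p.1 ∧ stateOcc M π' h p.1 = 0}

/-! ### Pessimistic value iteration -/

/-- PVI pessimistic value estimate (with fuel), given the empirical model `Phat` and
bonus `b`:  `V̂_h(s) = max_a max{r(s,a) + P̂_h V̂_{h+1}(s,a) - b_h(s,a), 0}`. -/
noncomputable def VhatFuel (M : TabMDP S A) (Phat : ℕ → S → A → S → ℝ)
    (b : ℕ → S → A → ℝ) : ℕ → ℕ → S → ℝ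
  | 0, _, _ => 0
  | n + 1, h, s =>
      ⨆ a : A,
        max (M.r h s a + (∑ s', Phat h s a s' * VhatFuel M Phat b n (h + 1) s') - b h s a) 0

/-- `V̂_h(s)`, the PVI pessimistic value estimate. -/
noncomputable def Vhat (M : TabMDP S A) (Phat : ℕ → S → A → S → ℝ)
    (b : ℕ → S → A → ℝ) (h : ℕ) (s : S) : ℝ :=
  VhatFuel M Phat b (M.H + 1 - h) h s

/-- `Q̂_h(s,a) = max{r(s,a) + P̂_h V̂_{h+1}(s,a) - b_h(s,a), 0}`, the PVI pessimistic
Q estimate. -/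
noncomputable def Qhat (M : TabMDP S A) (Phat : ℕ → S → A → S → ℝ)
    (b : ℕ → S → A → ℝ) (h : ℕ) (s : S) (a : A) : ℝ :=
  max (M.r h s a + (∑ s', Phat h s a s' * Vhat M Phat b (h + 1) s') - b h s a) 0

/-- PVI surplus `E_h(s,a) := r(s,a) + P_h V̂_{h+1}(s,a) - Q̂_h(s,a)`. -/
noncomputable def surplus (M : TabMDP S A) (Phat : ℕ → S → A → S → ℝ)
    (b : ℕ → S → A → ℝ) (h : ℕ) (s : S) (a : A) : ℝ :=
  M.r h s a + (∑ s', M.P h s a s' * Vhat M Phat b (h + 1) s') - Qhat M Phat b h s a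

/-- Value of a deterministic policy for the reward `r - Ebar` (clipped-surplus value `V̈`),
with fuel. -/
noncomputable def VclipFuel (M : TabMDP S A) (π : ℕ → S → A) (Ebar : ℕ → S → A → ℝ) :
    ℕ → ℕ → S → ℝ
  | 0, _, _ => 0
  | n + 1, h, s =>
      (M.r h s (π h s) - Ebar h s (π h s)) +
        ∑ s', M.P h s (π h s) s' * VclipFuel M π Ebar n (h + 1) s'

/-- `V̈^π_h(s)`: value of `π` when the reward is reduced by `Ebar`. -/
noncomputable def Vclip (M : TabMDP S A) (π : ℕ → S → A) (Ebar : ℕ → S → A → ℝ)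
    (h : ℕ) (s : S) : ℝ :=
  VclipFuel M π Ebar (M.H + 1 - h) h s

end TabMDP

/-- `Clip[x | ε] := x · 𝟙[x ≥ ε]`. -/
noncomputable def clip (x ε : ℝ) : ℝ := if ε ≤ x then x else 0

set_option linter.unusedSectionVars false

namespace TabMDP

variable {S A : Type} [Fintype S] [Nonempty S] [Fintype A] [Nonempty A]

lemma stateOcc_nonneg (M : TabMDP S A) (π : ℕ → S → A) :
    ∀ h s, 0 ≤ M.stateOcc π h s
  | 0, s => le_refl 0
  | 1, s => by
      simp only [stateOcc]
      split <;> norm_num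
  | (h+2), s => by
      simp only [stateOcc]
      exact Finset.sum_nonneg fun s' _ =>
        mul_nonneg (stateOcc_nonneg M π (h+1) s') (M.P_nonneg _ _ _ _)

lemma qstar_bdd (M : TabMDP S A) (h : ℕ) (s : S) :
    BddAbove (Set.range fun a => M.Qstar h s a) :=
  (Set.finite_range _).bddAbove

lemma vfuel_le_vstarFuel (M : TabMDP S A) (π : ℕ → S → A) :
    ∀ n h s, M.Vfuel π n h s ≤ M.VstarFuel n h s
  | 0, h, s => le_refl 0
  | (n+1), h, s => by
      simp only [Vfuel, VstarFuel]
      refine le_trans ?_ (le_ciSup ((Set.finite_range _).bddAbove) (π h s))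
      gcongr with s' _
      · exact M.P_nonneg _ _ _ _
      · exact vfuel_le_vstarFuel M π n (h+1) s'

lemma V_le_Vstar (M : TabMDP S A) (π : ℕ → S → A) (h : ℕ) (s : S) :
    M.V π h s ≤ M.Vstar h s :=
  vfuel_le_vstarFuel M π _ h s

lemma vstar_eq_sup (M : TabMDP S A) (h : ℕ) (s : S) (hh : h ≤ M.H) :
    M.Vstar h s = ⨆ a : A, M.Qstar h s a := by
  have e1 : M.H + 1 - h = (M.H - h) + 1 := by omega
  have e2 : M.H + 1 - (h + 1) = M.H - h := by omega
  simp only [Vstar, Qstar, e1, e2, VstarFuel]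

lemma qstar_le_vstar (M : TabMDP S A) (h : ℕ) (s : S) (a : A) (hh : h ≤ M.H) :
    M.Qstar h s a ≤ M.Vstar h s := by
  rw [vstar_eq_sup M h s hh]
  exact le_ciSup (qstar_bdd M h s) a

lemma gap_nonneg (M : TabMDP S A) (h : ℕ) (s : S) (a : A) (hh : h ≤ M.H) :
    0 ≤ M.gap h s a := by
  have := qstar_le_vstar M h s a hh
  simp only [gap]; linarith

lemma v_step (M : TabMDP S A) (π : ℕ → S → A) (h : ℕ) (s : S) (hh : h ≤ M.H) :
    M.V π h s = M.r h s (π h s) + ∑ s', M.P h s (π h s) s' * M.V π (h+1) s' := by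
  have e1 : M.H + 1 - h = (M.H - h) + 1 := by omega
  have e2 : M.H + 1 - (h + 1) = M.H - h := by omega
  simp only [V, e1, e2, Vfuel]

lemma vstar_top (M : TabMDP S A) (s : S) : M.Vstar (M.H + 1) s = 0 := by
  simp only [Vstar, Nat.sub_self, VstarFuel]

lemma v_top (M : TabMDP S A) (π : ℕ → S → A) (s : S) : M.V π (M.H + 1) s = 0 := by
  simp only [V, Nat.sub_self, Vfuel]

/-- an action maximizing `Qstar`. -/
noncomputable def astar (M : TabMDP S A) (h : ℕ) (s : S) : A :=
  Classical.choose (Finset.exists_max_image Finset.univ (M.Qstar h s) Finset.univ_nonempty)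

lemma astar_spec (M : TabMDP S A) (h : ℕ) (s : S) (a : A) :
    M.Qstar h s a ≤ M.Qstar h s (M.astar h s) := by
  obtain ⟨-, hb⟩ := Classical.choose_spec
    (Finset.exists_max_image Finset.univ (M.Qstar h s) Finset.univ_nonempty)
  exact hb a (Finset.mem_univ a)

lemma gap_astar (M : TabMDP S A) (h : ℕ) (s : S) (hh : h ≤ M.H) :
    M.gap h s (M.astar h s) = 0 := by
  have h1 : M.Vstar h s ≤ M.Qstar h s (M.astar h s) := by
    rw [vstar_eq_sup M h s hh]
    exact ciSup_le fun a => astar_spec M h s a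
  have h2 := qstar_le_vstar M h s (M.astar h s) hh
  simp only [gap]; linarith

/-- The improved policy: agree with `π` where `π ` has zero gap, else act greedily. -/
noncomputable def pistar (M : TabMDP S A) (π : ℕ → S → A) : ℕ → S → A :=
  fun h s => if M.gap h s (π h s) = 0 then π h s else M.astar h s

lemma gap_pistar (M : TabMDP S A) (π : ℕ → S → A) (h : ℕ) (s : S) (hh : h ≤ M.H) :
    M.gap h s (M.pistar π h s) = 0 := by
  unfold pistar
  split
  · assumption
  · exact gap_astar M h s hh

lemma pistar_eq_of_gap_zero (M : TabMDP S A) (π : ℕ → S → A) (h : ℕ) (s : S)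
    (hg : M.gap h s (π h s) = 0) : M.pistar π h s = π h s := by
  simp [pistar, hg]

lemma vfuel_pistar (M : TabMDP S A) (π : ℕ → S → A) :
    ∀ n h s, n + h = M.H + 1 → M.Vfuel (M.pistar π) n h s = M.VstarFuel n h s
  | 0, h, s, _ => rfl
  | (n+1), h, s, hn => by
      have hh : h ≤ M.H := by omega
      have e2 : M.H + 1 - (h + 1) = n := by omega
      have key := gap_pistar M π h s hh
      have : M.Qstar h s (M.pistar π h s) = M.Vstar h s := by
        simp only [gap] at key; linarith
      calc M.Vfuel (M.pistar π) (n+1) h s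
          = M.r h s (M.pistar π h s) +
            ∑ s', M.P h s (M.pistar π h s) s' * M.VstarFuel n (h+1) s' := by
            simp only [Vfuel]
            congr 1
            exact Finset.sum_congr rfl fun s' _ => by
              rw [vfuel_pistar M π n (h+1) s' (by omega)]
        _ = M.Qstar h s (M.pistar π h s) := by
            simp only [Qstar, Vstar, e2]
        _ = M.Vstar h s := this
        _ = M.VstarFuel (n+1) h s := by
            simp only [Vstar]
            congr 1
            omega

lemma pistar_optimal (M : TabMDP S A) (π : ℕ → S → A) : M.IsOptimal (M.pistar π) := by
  unfold IsOptimal V Vstar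
  exact vfuel_pistar M π (M.H + 1 - 1) 1 M.s0 (by omega)

lemma stateOcc_step (M : TabMDP S A) (π : ℕ → S → A) (h : ℕ) (hh : 1 ≤ h) (s' : S) :
    M.stateOcc π (h+1) s' = ∑ s, M.stateOcc π h s * M.P h s (π h s) s' := by
  obtain ⟨m, rfl⟩ : ∃ m, h = m + 1 := ⟨h - 1, by omega⟩
  simp only [stateOcc]

/-- One step of the performance difference lemma. -/
lemma pdl_step (M : TabMDP S A) (π : ℕ → S → A) (h : ℕ) (hh1 : 1 ≤ h) (hh2 : h ≤ M.H) :
    ∑ s, M.stateOcc π h s * (M.Vstar h s - M.V π h s)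
      = (∑ s, M.stateOcc π h s * M.gap h s (π h s))
        + ∑ s', M.stateOcc π (h+1) s' * (M.Vstar (h+1) s' - M.V π (h+1) s') := by
  have key : ∀ s, M.Vstar h s - M.V π h s
      = M.gap h s (π h s) + ∑ s', M.P h s (π h s) s' * (M.Vstar (h+1) s' - M.V π (h+1) s') := by
    intro s
    rw [v_step M π h s hh2]
    simp only [gap, Qstar, mul_sub, Finset.sum_sub_distrib]
    ring
  calc ∑ s, M.stateOcc π h s * (M.Vstar h s - M.V π h s)
      = ∑ s, (M.stateOcc π h s * M.gap h s (π h s)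
          + ∑ s', M.stateOcc π h s * M.P h s (π h s) s' * (M.Vstar (h+1) s' - M.V π (h+1) s')) := by
        refine Finset.sum_congr rfl fun s _ => ?_
        rw [key s, mul_add, Finset.mul_sum]
        congr 1
        exact Finset.sum_congr rfl fun s' _ => by ring
    _ = _ := by
        rw [Finset.sum_add_distrib]
        congr 1
        rw [Finset.sum_comm]
        refine Finset.sum_congr rfl fun s' _ => ?_
        rw [stateOcc_step M π h hh1 s', Finset.sum_mul]

lemma pdl_tail_nonneg (M : TabMDP S A) (π : ℕ → S → A) (h : ℕ) :
    0 ≤ ∑ s, M.stateOcc π h s * (M.Vstar h s - M.V π h s) :=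
  Finset.sum_nonneg fun s _ => mul_nonneg (stateOcc_nonneg M π h s)
    (by have := V_le_Vstar M π h s; linarith)

lemma gapsum_nonneg (M : TabMDP S A) (π : ℕ → S → A) (h : ℕ) (hh2 : h ≤ M.H) :
    0 ≤ ∑ s, M.stateOcc π h s * M.gap h s (π h s) :=
  Finset.sum_nonneg fun s _ => mul_nonneg (stateOcc_nonneg M π h s)
    (gap_nonneg M h s _ hh2)

/-- Chain: the total suboptimality at step `h` dominates the gap-sum at any later step `h0`. -/
lemma pdl_chain (M : TabMDP S A) (π : ℕ → S → A) (h0 : ℕ) (hh0 : h0 ≤ M.H) :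
    ∀ j h, 1 ≤ h → h + j = h0 →
      (∑ s, M.stateOcc π h0 s * M.gap h0 s (π h0 s))
        ≤ ∑ s, M.stateOcc π h s * (M.Vstar h s - M.V π h s)
  | 0, h, h1, hj => by
      simp only [Nat.add_zero] at hj
      subst hj
      rw [pdl_step M π h h1 hh0]
      have := pdl_tail_nonneg M π (h+1)
      linarith
  | (j+1), h, h1, hj => by
      have := pdl_chain M π h0 hh0 j (h+1) (by omega) (by omega)
      rw [pdl_step M π h h1 (by omega)]
      have := gapsum_nonneg M π h (by omega)
      linarith

/-- If all gap-sums vanish, the policy is optimal. -/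
lemma pdl_zero (M : TabMDP S A) (π : ℕ → S → A)
    (hz : ∀ h, 1 ≤ h → h ≤ M.H → (∑ s, M.stateOcc π h s * M.gap h s (π h s)) = 0) :
    ∀ j h, 1 ≤ h → h + j = M.H + 1 →
      (∑ s, M.stateOcc π h s * (M.Vstar h s - M.V π h s)) = 0
  | 0, h, h1, hj => by
      have : h = M.H + 1 := by omega
      subst this
      refine Finset.sum_eq_zero fun s _ => ?_
      rw [vstar_top, v_top]; ring
  | (j+1), h, h1, hj => by
      have ih := pdl_zero M π hz j (h+1) (by omega) (by omega)
      rw [pdl_step M π h h1 (by omega), ih, hz h h1 (by omega), add_zero]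

/-- Occupancies of `π` and `pistar π` agree up to the first disagreement step. -/
lemma stateOcc_agree (M : TabMDP S A) (π π' : ℕ → S → A) (h0 : ℕ)
    (hagree : ∀ h s, 1 ≤ h → h < h0 → 0 < M.stateOcc π h s → π h s = π' h s) :
    ∀ h, 1 ≤ h → h ≤ h0 → ∀ s, M.stateOcc π h s = M.stateOcc π' h s
  | 0, h1, _ => by omega
  | 1, _, _ => fun s => by simp only [stateOcc]
  | (h+2), _, hle => fun s' => by
      have ih := stateOcc_agree M π π' h0 hagree (h+1) (by omega) (by omega)
      simp only [stateOcc]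
      refine Finset.sum_congr rfl fun s _ => ?_
      rcases eq_or_lt_of_le (stateOcc_nonneg M π (h+1) s) with hzero | hpos
      · rw [← ih s, ← hzero]; ring
      · rw [ih s, hagree (h+1) s (by omega) (by omega) hpos]

end TabMDP


/-- Any non-optimal deterministic policy `π` of a tabular MDP with minimal gap `Δmin`
satisfies `V₁*(s₁) − V₁^π(s₁) ≥ dmin · Δmin`, where `dmin` lower bounds every positive
occupancy `d^{π*}(s_h,a_h)` of every deterministic optimal policy `π*`. -/
theorem subopt_policy_value_gap
    {S A : Type} [Fintype S] [Nonempty S] [Fintype A] [Nonempty A]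
    (M : TabMDP S A) (Δmin dmin : ℝ) (hΔmin : 0 < Δmin)
    (hgap : ∀ h s a, 1 ≤ h → h ≤ M.H → TabMDP.gap M h s a = 0 ∨ Δmin ≤ TabMDP.gap M h s a)
    (hdmin : ∀ π' : ℕ → S → A, TabMDP.IsOptimal M π' →
      ∀ h s a, 1 ≤ h → h ≤ M.H → 0 < TabMDP.occ M π' h s a → dmin ≤ TabMDP.occ M π' h s a)
    (π : ℕ → S → A) (hπ : ¬ TabMDP.IsOptimal M π) :
    dmin * Δmin ≤ TabMDP.Vstar M 1 M.s0 - TabMDP.V M π 1 M.s0 := by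
  classical
  set π' := TabMDP.pistar M π with hπ'
  have hopt : TabMDP.IsOptimal M π' := TabMDP.pistar_optimal M π
  have hsum1 : ∀ X : S → ℝ, (∑ s, TabMDP.stateOcc M π 1 s * X s) = X M.s0 := by
    intro X
    simp only [TabMDP.stateOcc, ite_mul, one_mul, zero_mul]
    rw [Finset.sum_ite_eq' Finset.univ M.s0 X]
    simp
  by_cases hcase : ∀ h s, 1 ≤ h → h ≤ M.H → 0 < TabMDP.stateOcc M π h s → π h s = π' h s
  · -- then π is optimal: contradiction
    exfalso
    apply hπ
    have hz : ∀ h, 1 ≤ h → h ≤ M.H →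
        (∑ s, TabMDP.stateOcc M π h s * TabMDP.gap M h s (π h s)) = 0 := by
      intro h h1 h2
      refine Finset.sum_eq_zero fun s _ => ?_
      rcases eq_or_lt_of_le (TabMDP.stateOcc_nonneg M π h s) with hzero | hpos
      · rw [← hzero]; ring
      · rw [hcase h s h1 h2 hpos]
        rw [hπ'] at *
        rw [TabMDP.gap_pistar M π h s h2, mul_zero]
    have := TabMDP.pdl_zero M π hz M.H 1 (le_refl 1) (by omega)
    rw [hsum1 (fun s => TabMDP.Vstar M 1 s - TabMDP.V M π 1 s)] at this
    unfold TabMDP.IsOptimal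
    linarith
  · push_neg at hcase
    have hex : ∃ h, 1 ≤ h ∧ h ≤ M.H ∧ ∃ s, 0 < TabMDP.stateOcc M π h s ∧ π h s ≠ π' h s := by
      obtain ⟨h, s, h1, h2, hpos, hne⟩ := hcase
      exact ⟨h, h1, h2, s, hpos, hne⟩
    set h0 := Nat.find hex with hh0def
    obtain ⟨h01, h0H, s', hspos, hsne⟩ := Nat.find_spec hex
    have hmin : ∀ h s, 1 ≤ h → h < h0 → 0 < TabMDP.stateOcc M π h s → π h s = π' h s := by
      intro h s h1 hlt hpos
      by_contra hne
      exact Nat.find_min hex hlt ⟨h1, by omega, s, hpos, hne⟩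
    have hocc_eq : TabMDP.stateOcc M π h0 s' = TabMDP.stateOcc M π' h0 s' :=
      TabMDP.stateOcc_agree M π π' h0 hmin h0 h01 (le_refl h0) s'
    have hdpos : 0 < TabMDP.occ M π' h0 s' (π' h0 s') := by
      unfold TabMDP.occ
      rw [if_pos rfl, ← hocc_eq]
      exact hspos
    have hd : dmin ≤ TabMDP.stateOcc M π h0 s' := by
      have := hdmin π' hopt h0 s' (π' h0 s') h01 h0H hdpos
      unfold TabMDP.occ at this
      rw [if_pos rfl, ← hocc_eq] at this
      exact this
    have hgapbig : Δmin ≤ TabMDP.gap M h0 s' (π h0 s') := by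
      rcases hgap h0 s' (π h0 s') h01 h0H with h | h
      · exact absurd (TabMDP.pistar_eq_of_gap_zero M π h0 s' h) (Ne.symm hsne)
      · exact h
    have hterm : dmin * Δmin ≤
        ∑ s, TabMDP.stateOcc M π h0 s * TabMDP.gap M h0 s (π h0 s) := by
      have hle : dmin * Δmin ≤ TabMDP.stateOcc M π h0 s' * TabMDP.gap M h0 s' (π h0 s') :=
        mul_le_mul hd hgapbig (le_of_lt hΔmin) (le_of_lt hspos)
      refine le_trans hle (Finset.single_le_sum (f := fun s =>
        TabMDP.stateOcc M π h0 s * TabMDP.gap M h0 s (π h0 s)) ?_ (Finset.mem_univ s'))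
      intro s _
      exact mul_nonneg (TabMDP.stateOcc_nonneg M π h0 s) (TabMDP.gap_nonneg M h0 s _ h0H)
    have hchain := TabMDP.pdl_chain M π h0 h0H (h0 - 1) 1 (le_refl 1) (by omega)
    rw [hsum1 (fun s => TabMDP.Vstar M 1 s - TabMDP.V M π 1 s)] at hchain
    linarith
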